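/- arXiv:2302.11334 — 2 statements merged into one kernel-verified Lean document; each statement's English description precedes it below -/
import Mathlib

section
/- Let T_p > 0 and η > 0. Suppose V : [0, T_p) → ℝ is differentiable, V(t) ≥ 0 for all t, and V'(t) ≤ −η V(t)/(T_p − t) for all t ∈ [0, T_p). Then V(t) ≤ V(0) ((T_p − t)/T_p)^η for all t ∈ [0, T_p), and consequently V(t) → 0 as t → T_p from the left. -/
open Filter Topology Set Real

/-!
Multiplying by the integrating factor `(T_p - t)^(-η)` turns the differential inequality into
`(V · (T_p - t)^(-η))' ≤ 0`, so this product is antitone on `[0, T_p)`; evaluating it at `0` and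
at `t` gives the bound, and the bound squeezes the nonnegative `V` to `0` at `T_p`.
-/

lemma hasDerivAt_sub_rpow_neg {c x : ℝ} (η : ℝ) (hx : x < c) :
    HasDerivAt (fun t => (c - t) ^ (-η)) (η * (c - x) ^ (-η - 1)) x := by
  have hsub : HasDerivAt (fun t : ℝ => c - t) (-1) x := by
    simpa using (hasDerivAt_id x).const_sub c
  have hrpow := Real.hasDerivAt_rpow_const (p := -η) (Or.inl (sub_pos.2 hx).ne')
  exact (hrpow.comp x hsub).congr_deriv (by ring)

section Comparison

variable {a b η : ℝ} {V V' : ℝ → ℝ}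

lemma antitoneOn_mul_sub_rpow_neg (hd : ∀ t ∈ Ico a b, HasDerivAt V (V' t) t)
    (hineq : ∀ t ∈ Ico a b, V' t ≤ -η * V t / (b - t)) :
    AntitoneOn (fun t => V t * (b - t) ^ (-η)) (Ico a b) := by
  have hF : ∀ t ∈ Ico a b, HasDerivAt (fun t => V t * (b - t) ^ (-η))
      (V' t * (b - t) ^ (-η) + V t * (η * (b - t) ^ (-η - 1))) t :=
    fun t ht => (hd t ht).mul (hasDerivAt_sub_rpow_neg η ht.2)
  have hF_nonpos : ∀ t ∈ Ico a b,
      V' t * (b - t) ^ (-η) + V t * (η * (b - t) ^ (-η - 1)) ≤ 0 := by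
    intro t ht
    have hpos : 0 < b - t := sub_pos.2 ht.2
    have hsplit : (b - t) ^ (-η - 1) = (b - t) ^ (-η) / (b - t) := by
      rw [Real.rpow_sub hpos, Real.rpow_one]
    calc V' t * (b - t) ^ (-η) + V t * (η * (b - t) ^ (-η - 1))
        ≤ -η * V t / (b - t) * (b - t) ^ (-η) + V t * (η * (b - t) ^ (-η - 1)) := by
          gcongr
          exact hineq t ht
      _ = 0 := by rw [hsplit]; field_simp; ring
  exact antitoneOn_of_deriv_nonpos (convex_Ico a b)
    (fun t ht => (hF t ht).continuousAt.continuousWithinAt)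
    (fun t ht => (hF t (interior_subset ht)).differentiableAt.differentiableWithinAt)
    (fun t ht => (hF t (interior_subset ht)).deriv ▸ hF_nonpos t (interior_subset ht))

lemma le_mul_div_rpow_of_deriv_le (hd : ∀ t ∈ Ico a b, HasDerivAt V (V' t) t)
    (hineq : ∀ t ∈ Ico a b, V' t ≤ -η * V t / (b - t)) {t : ℝ} (ht : t ∈ Ico a b) :
    V t ≤ V a * ((b - t) / (b - a)) ^ η := by
  have hab : a ∈ Ico a b := ⟨le_rfl, ht.1.trans_lt ht.2⟩
  have hpos_t : 0 < b - t := sub_pos.2 ht.2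
  have hpos_a : 0 < b - a := sub_pos.2 hab.2
  have hmono : V t * (b - t) ^ (-η) ≤ V a * (b - a) ^ (-η) :=
    antitoneOn_mul_sub_rpow_neg hd hineq hab ht ht.1
  calc V t = V t * (b - t) ^ (-η) * (b - t) ^ η := by
        rw [mul_assoc, ← Real.rpow_add hpos_t, neg_add_cancel, Real.rpow_zero, mul_one]
    _ ≤ V a * (b - a) ^ (-η) * (b - t) ^ η := by gcongr
    _ = V a * ((b - t) / (b - a)) ^ η := by
        rw [Real.div_rpow hpos_t.le hpos_a.le, Real.rpow_neg hpos_a.le]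
        ring

end Comparison

lemma tendsto_mul_sub_div_rpow_nhdsLT {b η : ℝ} (c : ℝ) (hη : 0 < η) :
    Tendsto (fun t => c * ((b - t) / b) ^ η) (𝓝[<] b) (𝓝 0) := by
  have hcont : Continuous (fun t : ℝ => c * ((b - t) / b) ^ η) := by
    fun_prop (disch := exact hη.le)
  simpa [Real.zero_rpow hη.ne'] using (hcont.tendsto b).mono_left nhdsWithin_le_nhds

/-- Upper-clamp comparison lemma for the linear RCDF: a nonnegative Lyapunov
function satisfying `V' ≤ −ηV/(T_p − t)` on `[0, T_p)` satisfies
`V(t) ≤ V(0)((T_p − t)/T_p)^η`, and consequently converges to zero no later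
than the prescribed instant `T_p`. -/
theorem linear_rcdf_upper_clamp
    (Tp η : ℝ) (hTp : 0 < Tp) (hη : 0 < η)
    (V V' : ℝ → ℝ)
    (hd : ∀ t ∈ Ico (0 : ℝ) Tp, HasDerivAt V (V' t) t)
    (hnn : ∀ t ∈ Ico (0 : ℝ) Tp, 0 ≤ V t)
    (hineq : ∀ t ∈ Ico (0 : ℝ) Tp, V' t ≤ -η * V t / (Tp - t)) :
    (∀ t ∈ Ico (0 : ℝ) Tp, V t ≤ V 0 * ((Tp - t) / Tp) ^ η) ∧
      Tendsto V (𝓝[<] Tp) (𝓝 0) := by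
  have hbound : ∀ t ∈ Ico (0 : ℝ) Tp, V t ≤ V 0 * ((Tp - t) / Tp) ^ η := fun t ht => by
    simpa using le_mul_div_rpow_of_deriv_le hd hineq ht
  have hIco : Ico (0 : ℝ) Tp ∈ 𝓝[<] Tp := Ico_mem_nhdsLT hTp
  refine ⟨hbound, squeeze_zero' ?_ ?_ (tendsto_mul_sub_div_rpow_nhdsLT (V 0) hη)⟩
  · filter_upwards [hIco] using hnn
  · filter_upwards [hIco] using hbound
end

section
/- Let T_p > 0 and η > 0. Suppose V : [0, T_p) → ℝ is differentiable, V(t) ≥ 0 for all t, and V'(t) ≥ −η V(t)/(T_p − t) for all t ∈ [0, T_p). Then V(t) ≥ V(0) ((T_p − t)/T_p)^η for all t ∈ [0, T_p). In particular, if V(0) > 0 then V(t) > 0 for every t ∈ [0, T_p), so V does not vanish before the instant T_p. -/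
open Filter Topology Set Real

/-!
Dividing `V` by the reference trajectory `g(t) = ((T_p - t)/T_p)^η`, which solves
`g' = -η g/(T_p - t)` with `g(0) = 1`, turns the reversed differential inequality into
`(V/g)' ≥ 0`. Hence `V/g` is nondecreasing on `[0, T_p)`, i.e. `V(t) ≥ V(0) g(t)`, and
`g > 0` there.
-/

theorem monotoneOn_div_of_mul_deriv_le {f g f' g' : ℝ → ℝ} {s : Set ℝ} (hs : Convex ℝ s)
    (hf : ∀ x ∈ s, HasDerivAt f (f' x) x) (hg : ∀ x ∈ s, HasDerivAt g (g' x) x)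
    (hg₀ : ∀ x ∈ s, 0 < g x) (hfg : ∀ x ∈ s, f x * g' x ≤ f' x * g x) :
    MonotoneOn (fun x => f x / g x) s := by
  have hdiv : ∀ x ∈ s, HasDerivAt (fun x => f x / g x)
      ((f' x * g x - f x * g' x) / g x ^ 2) x :=
    fun x hx => (hf x hx).div (hg x hx) (hg₀ x hx).ne'
  refine monotoneOn_of_hasDerivWithinAt_nonneg hs
    (fun x hx => (hdiv x hx).continuousAt.continuousWithinAt)
    (fun x hx => (hdiv x (interior_subset hx)).hasDerivWithinAt) fun x hx => ?_
  exact div_nonneg (sub_nonneg.2 (hfg x (interior_subset hx))) (sq_nonneg _)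

theorem hasDerivAt_sub_div_rpow {T t : ℝ} (η : ℝ) (hT : 0 < T) (ht : t < T) :
    HasDerivAt (fun s => ((T - s) / T) ^ η) (-η / (T - t) * ((T - t) / T) ^ η) t := by
  have hTt : 0 < T - t := sub_pos.2 ht
  have hlin : HasDerivAt (fun s => (T - s) / T) (-1 / T) t := by
    simpa using ((hasDerivAt_id t).const_sub T).div_const T
  convert hlin.rpow_const (p := η) (Or.inl (div_pos hTt hT).ne') using 1
  rw [rpow_sub_one (div_pos hTt hT).ne']
  field_simp

theorem linear_rcdf_lower_clamp_general
    (Tp η : ℝ) (hTp : 0 < Tp)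
    (V V' : ℝ → ℝ)
    (hd : ∀ t ∈ Ico (0 : ℝ) Tp, HasDerivAt V (V' t) t)
    (hineq : ∀ t ∈ Ico (0 : ℝ) Tp, -η * V t / (Tp - t) ≤ V' t) :
    (∀ t ∈ Ico (0 : ℝ) Tp, V 0 * ((Tp - t) / Tp) ^ η ≤ V t) ∧
      (0 < V 0 → ∀ t ∈ Ico (0 : ℝ) Tp, 0 < V t) := by
  set g : ℝ → ℝ := fun t => ((Tp - t) / Tp) ^ η
  have hg₀ : ∀ t ∈ Ico (0 : ℝ) Tp, 0 < g t :=
    fun t ht => rpow_pos_of_pos (div_pos (sub_pos.2 ht.2) hTp) η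
  have hmono : MonotoneOn (fun t => V t / g t) (Ico 0 Tp) := by
    refine monotoneOn_div_of_mul_deriv_le (convex_Ico 0 Tp) hd
      (fun t ht => hasDerivAt_sub_div_rpow η hTp ht.2) hg₀ fun t ht => ?_
    calc V t * (-η / (Tp - t) * g t) = -η * V t / (Tp - t) * g t := by ring
      _ ≤ V' t * g t := mul_le_mul_of_nonneg_right (hineq t ht) (hg₀ t ht).le
  have hclamp : ∀ t ∈ Ico (0 : ℝ) Tp, V 0 * g t ≤ V t := by
    intro t ht
    have h := hmono ⟨le_rfl, hTp⟩ ht ht.1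
    simp only [g, sub_zero, div_self hTp.ne', one_rpow, div_one] at h
    exact (le_div_iff₀ (hg₀ t ht)).1 h
  exact ⟨hclamp, fun hV0 t ht => (mul_pos hV0 (hg₀ t ht)).trans_le (hclamp t ht)⟩

/-- Lower-clamp comparison lemma for the linear RCDF: a nonnegative Lyapunov
function satisfying the reversed inequality `V' ≥ −ηV/(T_p − t)` on `[0, T_p)`
satisfies `V(t) ≥ V(0)((T_p − t)/T_p)^η`; in particular, if `V(0) > 0` then
`V` stays positive on `[0, T_p)`, so it does not vanish before `T_p`. -/
theorem linear_rcdf_lower_clamp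
    (Tp η : ℝ) (hTp : 0 < Tp) (hη : 0 < η)
    (V V' : ℝ → ℝ)
    (hd : ∀ t ∈ Ico (0 : ℝ) Tp, HasDerivAt V (V' t) t)
    (hnn : ∀ t ∈ Ico (0 : ℝ) Tp, 0 ≤ V t)
    (hineq : ∀ t ∈ Ico (0 : ℝ) Tp, -η * V t / (Tp - t) ≤ V' t) :
    (∀ t ∈ Ico (0 : ℝ) Tp, V 0 * ((Tp - t) / Tp) ^ η ≤ V t) ∧
      (0 < V 0 → ∀ t ∈ Ico (0 : ℝ) Tp, 0 < V t) :=
  linear_rcdf_lower_clamp_general Tp η hTp V V' hd hineq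
end
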